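/- arXiv:1703.00984 — 2 statements merged into one kernel-verified Lean document; each statement's English description precedes it below -/
import Mathlib

section
/- The m-dimensional Hausdorff measure of Y \ {p_0} with respect to d_Y equals the m-dimensional Hausdorff measure of X \ K with respect to d_X: H^m_Y(Y \ {p_0}) = H^m_X(X \ K). -/
open Metric MeasureTheory
open scoped ENNReal

/-- If `f` preserves distances between points of `s` whose images are at distance `≤ ε`,
then the Hausdorff measure of `s` is at most that of `f '' s`. -/
lemma aux_hausdorff_le {X Y : Type*} [MetricSpace X] [MetricSpace Y]
    [MeasurableSpace X] [BorelSpace X] [MeasurableSpace Y] [BorelSpace Y]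
    (m : ℕ) (f : X → Y) (s : Set X) (ε : ℝ) (hε : 0 < ε)
    (h : ∀ x ∈ s, ∀ y ∈ s, dist (f x) (f y) ≤ ε → dist x y = dist (f x) (f y)) :
    μH[m] s ≤ μH[m] (f '' s) := by
  rw [Measure.hausdorffMeasure_apply, Measure.hausdorffMeasure_apply]
  refine iSup₂_le fun r hr => ?_
  set r' : ℝ≥0∞ := min r (ENNReal.ofReal ε) with hr'def
  have hr' : 0 < r' := lt_min hr (ENNReal.ofReal_pos.2 hε)
  have hr'ε : r' ≤ ENNReal.ofReal ε := min_le_right _ _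
  -- the inner infimum is antitone in the scale, so pass from `r` to `r'`
  have step1 : (⨅ (t : ℕ → Set X) (_ : s ⊆ ⋃ n, t n) (_ : ∀ n, EMetric.diam (t n) ≤ r),
        ∑' n, ⨆ _ : (t n).Nonempty, EMetric.diam (t n) ^ (m : ℝ))
      ≤ ⨅ (t : ℕ → Set X) (_ : s ⊆ ⋃ n, t n) (_ : ∀ n, EMetric.diam (t n) ≤ r'),
        ∑' n, ⨆ _ : (t n).Nonempty, EMetric.diam (t n) ^ (m : ℝ) := by
    refine le_iInf fun t => le_iInf fun ht => le_iInf fun htd => ?_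
    refine le_trans (iInf₂_le t ht) (iInf_le _ fun n => (htd n).trans (min_le_left _ _))
  refine le_trans step1 ?_
  refine le_trans ?_ (le_iSup₂ (f := fun r _ => ⨅ (t : ℕ → Set Y) (_ : f '' s ⊆ ⋃ n, t n)
      (_ : ∀ n, EMetric.diam (t n) ≤ r),
        ∑' n, ⨆ _ : (t n).Nonempty, EMetric.diam (t n) ^ (m : ℝ)) r' hr')
  -- now compare covers at scale `r'`
  refine le_iInf fun t => le_iInf fun ht => le_iInf fun htd => ?_
  set u : ℕ → Set X := fun n => f ⁻¹' (t n) ∩ s with hu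
  have hcov : s ⊆ ⋃ n, u n := by
    intro x hx
    obtain ⟨_, ⟨n, rfl⟩, hn⟩ := ht ⟨x, hx, rfl⟩
    exact Set.mem_iUnion.2 ⟨n, hn, hx⟩
  have hdiam : ∀ n, EMetric.diam (u n) ≤ EMetric.diam (t n) := by
    intro n
    refine EMetric.diam_le fun x hx y hy => ?_
    have hfx : f x ∈ t n := hx.1
    have hfy : f y ∈ t n := hy.1
    have h1 : edist (f x) (f y) ≤ EMetric.diam (t n) := EMetric.edist_le_diam_of_mem hfx hfy
    have h2 : dist (f x) (f y) ≤ ε := by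
      have := h1.trans ((htd n).trans hr'ε)
      rw [edist_dist] at this
      exact (ENNReal.ofReal_le_ofReal_iff hε.le).1 this
    have h3 : dist x y = dist (f x) (f y) := h x hx.2 y hy.2 h2
    rw [edist_dist, h3, ← edist_dist]
    exact h1
  calc (⨅ (v : ℕ → Set X) (_ : s ⊆ ⋃ n, v n) (_ : ∀ n, EMetric.diam (v n) ≤ r'),
        ∑' n, ⨆ _ : (v n).Nonempty, EMetric.diam (v n) ^ (m : ℝ))
      ≤ ∑' n, ⨆ _ : (u n).Nonempty, EMetric.diam (u n) ^ (m : ℝ) := by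
        exact le_trans (iInf₂_le u hcov) (iInf_le _ fun n => (hdiam n).trans (htd n))
    _ ≤ ∑' n, ⨆ _ : (t n).Nonempty, EMetric.diam (t n) ^ (m : ℝ) := by
        refine ENNReal.tsum_le_tsum fun n => ?_
        refine iSup_le fun hne => ?_
        obtain ⟨x, hx⟩ := hne
        refine le_iSup_of_le ⟨f x, hx.1⟩ ?_
        exact ENNReal.rpow_le_rpow (hdiam n) (Nat.cast_nonneg m)

/-- for the pulled-set space `Y` (quotient of `X` collapsing the
compact set `K` to the point `p₀`, with the pulled metric), the `m`-dimensional
Hausdorff measures satisfy `H^m_Y(Y \ {p₀}) = H^m_X(X \ K)`. -/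
theorem hausdorff_pulled_set {X Y : Type*} [MetricSpace X] [MetricSpace Y]
    [MeasurableSpace X] [BorelSpace X] [MeasurableSpace Y] [BorelSpace Y]
    (m : ℕ) (K : Set X) (hK : IsCompact K) (hKne : K.Nonempty)
    (ψ : X → Y) (p₀ : Y) (hsurj : Function.Surjective ψ)
    (hfib : ∀ x, ψ x = p₀ ↔ x ∈ K)
    (hdist₀ : ∀ x : X, dist (ψ x) p₀ = infDist x K)
    (hdist : ∀ x₁ x₂ : X, x₁ ∉ K → x₂ ∉ K →
      dist (ψ x₁) (ψ x₂) = min (dist x₁ x₂) (infDist x₁ K + infDist x₂ K)) :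
    μH[m] ({p₀}ᶜ : Set Y) = μH[m] (Kᶜ : Set X) := by
  have hKclosed : IsClosed K := hK.isClosed
  have himg : ψ '' Kᶜ = ({p₀}ᶜ : Set Y) := by
    ext y
    constructor
    · rintro ⟨x, hx, rfl⟩
      simpa using fun h => hx ((hfib x).1 h)
    · intro hy
      obtain ⟨x, rfl⟩ := hsurj y
      exact ⟨x, fun hx => hy ((hfib x).2 hx), rfl⟩
  refine le_antisymm ?_ ?_
  · -- `ψ` is 1-Lipschitz on `Kᶜ`
    have hlip : LipschitzOnWith 1 ψ Kᶜ := by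
      intro x hx y hy
      rw [edist_dist, edist_dist, hdist x y hx hy]
      simp only [ENNReal.coe_one, one_mul]
      exact ENNReal.ofReal_le_ofReal ((min_le_left _ _).trans le_rfl)
    calc μH[m] ({p₀}ᶜ : Set Y) = μH[m] (ψ '' Kᶜ) := by rw [himg]
      _ ≤ (1 : ℝ≥0∞) ^ (m : ℝ) * μH[m] (Kᶜ : Set X) :=
          hlip.hausdorffMeasure_image_le (Nat.cast_nonneg m)
      _ = μH[m] (Kᶜ : Set X) := by simp
  · -- reverse inequality via exhaustion
    set A : ℕ → Set X := fun n => {x | 1 / (n + 1 : ℝ) ≤ infDist x K} with hA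
    have hmono : Monotone A := by
      intro a b hab x hx
      simp only [hA, Set.mem_setOf_eq] at hx ⊢
      refine le_trans ?_ hx
      apply one_div_le_one_div_of_le (by positivity)
      have : (a:ℝ) ≤ b := Nat.cast_le.2 hab
      linarith
    have hAsub : ∀ n, A n ⊆ Kᶜ := by
      intro n x hx hxK
      have : infDist x K = 0 := by simp [infDist_zero_of_mem hxK]
      rw [Set.mem_setOf_eq, this] at hx
      have : (0:ℝ) < 1 / (n+1:ℝ) := by positivity
      linarith
    have hUnion : (⋃ n, A n) = Kᶜ := by
      refine Set.Subset.antisymm (Set.iUnion_subset hAsub) fun x hx => ?_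
      have hpos : 0 < infDist x K := by
        exact (hKclosed.notMem_iff_infDist_pos hKne).1 hx
      obtain ⟨n, hn⟩ := exists_nat_one_div_lt hpos
      exact Set.mem_iUnion.2 ⟨n, hn.le⟩
    have key : ∀ n, μH[m] (A n) ≤ μH[m] ({p₀}ᶜ : Set Y) := by
      intro n
      set ε : ℝ := 1 / (n + 1 : ℝ) with hε
      have hεpos : 0 < ε := by positivity
      have hiso : ∀ x ∈ A n, ∀ y ∈ A n, dist (ψ x) (ψ y) ≤ ε →
          dist x y = dist (ψ x) (ψ y) := by
        intro x hx y hy hd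
        have hxK : x ∉ K := hAsub n hx
        have hyK : y ∉ K := hAsub n hy
        rw [hdist x y hxK hyK] at hd ⊢
        have hsum : 2 * ε ≤ infDist x K + infDist y K := by
          have := hx; have := hy
          simp only [hA, Set.mem_setOf_eq] at hx hy
          linarith
        have : min (dist x y) (infDist x K + infDist y K) = dist x y := by
          rcases min_cases (dist x y) (infDist x K + infDist y K) with ⟨h1, _⟩ | ⟨h1, h2⟩
          · exact h1
          · exfalso; rw [h1] at hd; linarith
        rw [this]
      calc μH[m] (A n) ≤ μH[m] (ψ '' A n) := aux_hausdorff_le m ψ (A n) ε hεpos hiso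
        _ ≤ μH[m] ({p₀}ᶜ : Set Y) := by
            refine measure_mono ?_
            rw [← himg]
            exact Set.image_mono (hAsub n)
    calc μH[m] (Kᶜ : Set X) = μH[m] (⋃ n, A n) := by rw [hUnion]
      _ = ⨆ n, μH[m] (A n) := (hmono.directed_le).measure_iUnion
      _ ≤ μH[m] ({p₀}ᶜ : Set Y) := iSup_le key
end

section
/- For each j ∈ ℕ, let C_j = { y ∈ Y : d_Y(y, p_0) ≥ 1/j } and D_j = { x ∈ X : dist_X(x, K) ≥ 1/j }. Then H^m_X(D_j) ≤ H^m_Y(C_j). -/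
open Metric MeasureTheory

/-- with `C_j = {y ∈ Y : d_Y(y,p₀) ≥ 1/j}` and
`D_j = {x ∈ X : dist(x,K) ≥ 1/j}` (so `ψ⁻¹(C_j) = D_j`), one has
`H^m_X(D_j) ≤ H^m_Y(C_j)`. -/
theorem hausdorff_Dj_le_Cj {X Y : Type*} [MetricSpace X] [MetricSpace Y]
    [MeasurableSpace X] [BorelSpace X] [MeasurableSpace Y] [BorelSpace Y]
    (m : ℕ) (K : Set X) (hK : IsCompact K) (hKne : K.Nonempty)
    (ψ : X → Y) (p₀ : Y) (hsurj : Function.Surjective ψ)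
    (hfib : ∀ x, ψ x = p₀ ↔ x ∈ K)
    (hdist₀ : ∀ x : X, dist (ψ x) p₀ = infDist x K)
    (hdist : ∀ x₁ x₂ : X, x₁ ∉ K → x₂ ∉ K →
      dist (ψ x₁) (ψ x₂) = min (dist x₁ x₂) (infDist x₁ K + infDist x₂ K))
    (j : ℕ) (hj : 1 ≤ j)
    (Cj : Set Y) (hCj : Cj = {y : Y | 1 / (j : ℝ) ≤ dist y p₀})
    (Dj : Set X) (hDj : Dj = {x : X | 1 / (j : ℝ) ≤ infDist x K}) :
    μH[m] Dj ≤ μH[m] Cj := by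
  have hj0 : (0 : ℝ) < 1 / (j : ℝ) := by
    have : (0 : ℝ) < (j : ℝ) := by exact_mod_cast hj
    positivity
  -- points of Dj are not in K and have infDist ≥ 1/j
  have hDmem : ∀ x ∈ Dj, 1 / (j : ℝ) ≤ infDist x K ∧ x ∉ K := by
    intro x hx
    rw [hDj] at hx; simp only [Set.mem_setOf_eq] at hx
    refine ⟨hx, fun hxK => ?_⟩
    rw [infDist_zero_of_mem hxK] at hx
    linarith
  -- ψ maps Dj into Cj
  have hψD : ∀ x ∈ Dj, ψ x ∈ Cj := by
    intro x hx
    rw [hCj]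
    simpa [hdist₀ x] using (hDmem x hx).1
  rw [Measure.hausdorffMeasure_apply, Measure.hausdorffMeasure_apply]
  refine iSup₂_le fun r hr => ?_
  set r' := min r (ENNReal.ofReal (1 / (j : ℝ))) with hr'def
  have hr' : 0 < r' := lt_min hr (ENNReal.ofReal_pos.2 hj0)
  refine le_trans ?_ (le_iSup₂ (f := fun r _ => ⨅ (t : ℕ → Set Y) (_ : Cj ⊆ ⋃ n, t n)
      (_ : ∀ n, EMetric.diam (t n) ≤ r), ∑' n, ⨆ _ : (t n).Nonempty,
      EMetric.diam (t n) ^ (m : ℝ)) r' hr')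
  refine le_iInf fun t => le_iInf fun hcov => le_iInf fun hsmall => ?_
  -- pulled-back cover
  set t' : ℕ → Set X := fun n => ψ ⁻¹' (t n) ∩ Dj with ht'def
  have hcov' : Dj ⊆ ⋃ n, t' n := by
    intro x hx
    rcases Set.mem_iUnion.1 (hcov (hψD x hx)) with ⟨n, hn⟩
    exact Set.mem_iUnion.2 ⟨n, ⟨hn, hx⟩⟩
  -- key diameter estimate
  have hdiam : ∀ n, EMetric.diam (t' n) ≤ EMetric.diam (t n) := by
    intro n
    apply EMetric.diam_le
    rintro x ⟨hxt, hxD⟩ y ⟨hyt, hyD⟩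
    have hdψ : edist (ψ x) (ψ y) ≤ EMetric.diam (t n) :=
      EMetric.edist_le_diam_of_mem hxt hyt
    have hdψr : dist (ψ x) (ψ y) ≤ 1 / (j : ℝ) := by
      have h1 : edist (ψ x) (ψ y) ≤ ENNReal.ofReal (1 / (j : ℝ)) :=
        hdψ.trans ((hsmall n).trans (min_le_right _ _))
      rw [edist_dist] at h1
      exact (ENNReal.ofReal_le_ofReal_iff hj0.le).1 h1
    obtain ⟨hx1, hxK⟩ := hDmem x hxD
    obtain ⟨hy1, hyK⟩ := hDmem y hyD
    have hmin := hdist x y hxK hyK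
    have hsum : 1 / (j : ℝ) < infDist x K + infDist y K := by linarith
    have hdd : dist x y = dist (ψ x) (ψ y) := by
      rcases min_cases (dist x y) (infDist x K + infDist y K) with ⟨h1, _⟩ | ⟨h1, _⟩
      · rw [hmin, h1]
      · exfalso; rw [hmin, h1] at hdψr; linarith
    calc edist x y = edist (ψ x) (ψ y) := by rw [edist_dist, edist_dist, hdd]
    _ ≤ EMetric.diam (t n) := hdψ
  have hsmall' : ∀ n, EMetric.diam (t' n) ≤ r :=
    fun n => ((hdiam n).trans (hsmall n)).trans (min_le_left _ _)
  refine le_trans (iInf_le _ t') ?_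
  refine le_trans (iInf_le _ hcov') ?_
  refine le_trans (iInf_le _ hsmall') ?_
  refine ENNReal.tsum_le_tsum fun n => ?_
  refine iSup_le fun hne => ?_
  have hne' : (t n).Nonempty := by
    rcases hne with ⟨x, hx, _⟩
    exact ⟨ψ x, hx⟩
  refine le_trans ?_ (le_iSup _ hne')
  exact ENNReal.rpow_le_rpow (hdiam n) (by positivity)
end
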